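/- (Proposition 4 / §5.) Assume Δ = 0, γ ≠ 4, l ≠ −2 and m ≠ −2. Then (s₁ ∘ z₁)² = τ(−(2/(4−γ))·c₁) = τ(−2α/(4−γ), −2β/(4−γ)), (s₂ ∘ z₂)² = τ(−(2/(l+2))·c₂) = τ(4/(l+2), −2l/(l+2)), and (s₃ ∘ z₃)² = τ(−(2/(m+2))·c₃) = τ(−2m/(m+2), 4/(m+2)). -/

import Mathlib

noncomputable section

variable {K : Type*} [Field K] [CharZero K]

/-- The linear functional `x ↦ c 0 * x 0 + c 1 * x 1 + c 2 * x 2` on `K³`. -/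
def lf (c : Fin 3 → K) : (Fin 3 → K) →ₗ[K] K :=
  c 0 • LinearMap.proj 0 + c 1 • LinearMap.proj 1 + c 2 • LinearMap.proj 2

/-- `s₁ : x ↦ x − (2x₁ − α x₂ − β x₃)·a₁` where `a₁ = Pi.single 0 1`. -/
def s1 (α β : K) : Module.End K (Fin 3 → K) :=
  LinearMap.id - (lf ![2, -α, -β]).smulRight (Pi.single 0 1)

/-- `s₂ : x ↦ x − (−x₁ + 2x₂ − l·x₃)·a₂`. -/
def s2 (l : K) : Module.End K (Fin 3 → K) :=
  LinearMap.id - (lf ![-1, 2, -l]).smulRight (Pi.single 1 1)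

/-- `s₃ : x ↦ x − (−x₁ − m·x₂ + 2x₃)·a₃`. -/
def s3 (m : K) : Module.End K (Fin 3 → K) :=
  LinearMap.id - (lf ![-1, -m, 2]).smulRight (Pi.single 2 1)

/-- `b = b₁ = (4−γ)a₁ + (l+2)a₂ + (m+2)a₃`, with `γ = l·m`. -/
def bvec (l m : K) : Fin 3 → K := ![4 - l * m, l + 2, m + 2]

/-- `b₂ = (2α+βm)a₁ + (4−β)a₂ + (α+2m)a₃`. -/
def b2vec (α β l m : K) : Fin 3 → K := ![2*α + β*m, 4 - β, α + 2*m]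

/-- `b₃ = (2β+αl)a₁ + (β+2l)a₂ + (4−α)a₃`. -/
def b3vec (α β l m : K) : Fin 3 → K := ![2*β + α*l, β + 2*l, 4 - α]

/-- `τ(λ,μ) : a₁ ↦ a₁ + ω·b, a₂ ↦ a₂ + λ·b, a₃ ↦ a₃ + μ·b`,
where `ω = −(λ(l+2) + μ(m+2))/(4−γ)`. -/
def tau (l m lam mu : K) : Module.End K (Fin 3 → K) :=
  LinearMap.id +
    (lf ![-(lam*(l+2) + mu*(m+2))/(4 - l*m), lam, mu]).smulRight (bvec l m)

/-- `τ` applied to a vector `(λ,μ) ∈ K²`. -/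
def tauv (l m : K) (v : K × K) : Module.End K (Fin 3 → K) := tau l m v.1 v.2

def c1 (α β : K) : K × K := (α, β)
def c2 (l : K) : K × K := (-2, l)
def c3 (m : K) : K × K := (m, -2)

/-- `z₁ : a₁ ↦ −a₁ + (2/(4−γ))·b, a₂ ↦ −a₂, a₃ ↦ −a₃`. -/
def z1 (l m : K) : Module.End K (Fin 3 → K) :=
  -LinearMap.id + (lf ![2/(4 - l*m), 0, 0]).smulRight (bvec l m)

/-- `z₂ : a₂ ↦ −a₂ + (2/(l+2))·b, a₁ ↦ −a₁, a₃ ↦ −a₃`. -/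
def z2 (l m : K) : Module.End K (Fin 3 → K) :=
  -LinearMap.id + (lf ![0, 2/(l+2), 0]).smulRight (bvec l m)

/-- `z₃ : a₃ ↦ −a₃ + (2/(m+2))·b, a₁ ↦ −a₁, a₂ ↦ −a₂`. -/
def z3 (l m : K) : Module.End K (Fin 3 → K) :=
  -LinearMap.id + (lf ![0, 0, 2/(m+2)]).smulRight (bvec l m)

/-- The linear functional `(λ,μ) ↦ c.1·λ + c.2·μ` on `K²`. -/
def lf2 (c : K × K) : (K × K) →ₗ[K] K := c.1 • LinearMap.fst K K K + c.2 • LinearMap.snd K K K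

/-- `σ₁(λ,μ) = (λ,μ) − ((λ(l+2)+μ(m+2))/(4−γ))·(α,β)`. -/
def sigma1 (α β l m : K) : Module.End K (K × K) :=
  LinearMap.id - (lf2 ((l+2)/(4 - l*m), (m+2)/(4 - l*m))).smulRight (α, β)

/-- `σ₂(λ,μ) = (λ,μ) + λ·(−2,l)`. -/
def sigma2 (l : K) : Module.End K (K × K) :=
  LinearMap.id + (LinearMap.fst K K K).smulRight ((-2 : K), l)

/-- `σ₃(λ,μ) = (λ,μ) + μ·(m,−2)`. -/
def sigma3 (m : K) : Module.End K (K × K) :=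
  LinearMap.id + (LinearMap.snd K K K).smulRight (m, (-2 : K))

/-- The sequence `u_x` : `u_x(0)=0, u_x(1)=u_x(2)=1, u_x(3)=x−1,
u_x(n+4) = (x−2)·u_x(n+2) − u_x(n)`. -/
def useq (x : K) : ℕ → K
  | 0 => 0
  | 1 => 1
  | 2 => 1
  | 3 => x - 1
  | (n+4) => (x - 2) * useq x (n+2) - useq x n

/-!
Both `s` and `z` fix the null vector `b`: for `s₂, s₃` this holds identically, for `s₁` it is
exactly `Δ = 0`. Writing `s = 1 - φ ⊗ a` with `φ a = 2`, `φ b = 0` and `z = -1 + ψ ⊗ b` with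
`ψ b = 2`, one computes `(s z)² = 1 + ψ(a) φ ⊗ b`, a transvection along `b` by a functional
vanishing on `b`. Such a transvection is determined by the values of the functional on
`a₂, a₃`, and these are the parameters `(λ, μ)` of `τ`.
-/

section Transvection

variable {R V : Type*} [CommRing R] [AddCommGroup V] [Module R V]

theorem sq_reflection_mul_negReflection (φ ψ : V →ₗ[R] R) (a b : V)
    (hφa : φ a = 2) (hφb : φ b = 0) (hψb : ψ b = 2) :
    ((LinearMap.id - φ.smulRight a) * (-LinearMap.id + ψ.smulRight b)) ^ 2 =
      LinearMap.id + (ψ a • φ).smulRight b := by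
  ext x
  simp only [pow_two, Module.End.mul_apply, LinearMap.add_apply, LinearMap.sub_apply,
    LinearMap.neg_apply, LinearMap.id_apply, LinearMap.smulRight_apply, LinearMap.smul_apply,
    map_add, map_sub, map_neg, map_smul, hφa, hφb, hψb, smul_eq_mul]
  module

end Transvection

section

omit [CharZero K]

@[simp]
theorem lf_apply (c x : Fin 3 → K) : lf c x = c 0 * x 0 + c 1 * x 1 + c 2 * x 2 := rfl

theorem lf_single (c : Fin 3 → K) (i : Fin 3) : lf c (Pi.single i 1) = c i := by
  fin_cases i <;> simp

theorem lf_bvec (c : Fin 3 → K) (l m : K) :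
    lf c (bvec l m) = c 0 * (4 - l*m) + c 1 * (l+2) + c 2 * (m+2) := rfl

theorem lf_eq (χ : (Fin 3 → K) →ₗ[K] K) : χ = lf (fun i => χ (Pi.single i 1)) := by
  refine LinearMap.pi_ext fun i x => ?_
  rw [← mul_one x, ← smul_eq_mul, Pi.single_smul', map_smul, map_smul]
  fin_cases i <;> simp

theorem tau_eq_id_add_smulRight {l m : K} (hγ : l * m ≠ 4) (χ : (Fin 3 → K) →ₗ[K] K)
    (hχ : χ (bvec l m) = 0) :
    tau l m (χ (Pi.single 1 1)) (χ (Pi.single 2 1)) = LinearMap.id + χ.smulRight (bvec l m) := by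
  have h4 : (4 : K) - l * m ≠ 0 := sub_ne_zero.mpr hγ.symm
  have hb : χ (Pi.single 0 1) * (4 - l*m) + χ (Pi.single 1 1) * (l+2)
      + χ (Pi.single 2 1) * (m+2) = 0 := by
    rw [lf_eq χ] at hχ
    exact hχ
  rw [tau]
  conv_rhs => rw [lf_eq χ]
  congr
  ext i
  fin_cases i
  · show _ / _ = χ (Pi.single 0 1)
    rw [div_eq_iff h4]
    linear_combination -hb
  all_goals rfl

theorem tauv_smul_mk (l m r x y : K) : tauv l m (r • (x, y)) = tau l m (r * x) (r * y) := rfl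

theorem sq_s1_mul_z1 {α β l m : K} (hΔ : 8 - 2*α - 2*β - 2*(l*m) - (α*l + β*m) = 0)
    (hγ : l * m ≠ 4) :
    (s1 α β * z1 l m) ^ 2 = tau l m (-2*α/(4 - l*m)) (-2*β/(4 - l*m)) := by
  have hφb : lf ![2, -α, -β] (bvec l m) = 0 := by
    simp only [lf_bvec, Matrix.cons_val]
    linear_combination hΔ
  have hψb : lf ![2/(4 - l*m), 0, 0] (bvec l m) = 2 := by
    simp only [lf_bvec, Matrix.cons_val, div_mul_cancel₀ _ (sub_ne_zero.mpr hγ.symm)]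
    ring
  rw [s1, z1, sq_reflection_mul_negReflection _ _ _ _ (by simp) hφb hψb,
    ← tau_eq_id_add_smulRight hγ _ (by rw [LinearMap.smul_apply, hφb, smul_zero])]
  congr 1 <;> simp only [LinearMap.smul_apply, lf_single, Matrix.cons_val, smul_eq_mul] <;> ring

theorem sq_s2_mul_z2 {l m : K} (hγ : l * m ≠ 4) (hl : l ≠ -2) :
    (s2 l * z2 l m) ^ 2 = tau l m (4/(l+2)) (-2*l/(l+2)) := by
  have hφb : lf ![-1, 2, -l] (bvec l m) = 0 := by
    simp only [lf_bvec, Matrix.cons_val]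
    ring
  have hl2 : l + 2 ≠ 0 := mt eq_neg_of_add_eq_zero_left hl
  have hψb : lf ![0, 2/(l+2), 0] (bvec l m) = 2 := by
    simp only [lf_bvec, Matrix.cons_val, div_mul_cancel₀ _ hl2]
    ring
  rw [s2, z2, sq_reflection_mul_negReflection _ _ _ _ (by simp) hφb hψb,
    ← tau_eq_id_add_smulRight hγ _ (by rw [LinearMap.smul_apply, hφb, smul_zero])]
  congr 1 <;> simp only [LinearMap.smul_apply, lf_single, Matrix.cons_val, smul_eq_mul] <;> ring

theorem sq_s3_mul_z3 {l m : K} (hγ : l * m ≠ 4) (hm : m ≠ -2) :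
    (s3 m * z3 l m) ^ 2 = tau l m (-2*m/(m+2)) (4/(m+2)) := by
  have hφb : lf ![-1, -m, 2] (bvec l m) = 0 := by
    simp only [lf_bvec, Matrix.cons_val]
    ring
  have hm2 : m + 2 ≠ 0 := mt eq_neg_of_add_eq_zero_left hm
  have hψb : lf ![0, 0, 2/(m+2)] (bvec l m) = 2 := by
    simp only [lf_bvec, Matrix.cons_val, div_mul_cancel₀ _ hm2]
    ring
  rw [s3, z3, sq_reflection_mul_negReflection _ _ _ _ (by simp) hφb hψb,
    ← tau_eq_id_add_smulRight hγ _ (by rw [LinearMap.smul_apply, hφb, smul_zero])]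
  congr 1 <;> simp only [LinearMap.smul_apply, lf_single, Matrix.cons_val, smul_eq_mul] <;> ring

end

/-- Proposition 4 / §5: with `Δ = 0`, `γ ≠ 4`, `l ≠ −2`, `m ≠ −2`:
`(s₁z₁)² = τ(−(2/(4−γ))c₁) = τ(−2α/(4−γ), −2β/(4−γ))`,
`(s₂z₂)² = τ(−(2/(l+2))c₂) = τ(4/(l+2), −2l/(l+2))`,
`(s₃z₃)² = τ(−(2/(m+2))c₃) = τ(−2m/(m+2), 4/(m+2))`. -/
theorem stmt14 (α β l m : K)
    (hΔ : 8 - 2*α - 2*β - 2*(l*m) - (α*l + β*m) = 0) (hγ : l*m ≠ 4)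
    (hl : l ≠ -2) (hm : m ≠ -2) :
    (s1 α β * z1 l m)^2 = tauv l m ((-(2/(4 - l*m))) • c1 α β) ∧
    (s1 α β * z1 l m)^2 = tau l m (-2*α/(4 - l*m)) (-2*β/(4 - l*m)) ∧
    (s2 l * z2 l m)^2 = tauv l m ((-(2/(l+2))) • c2 l) ∧
    (s2 l * z2 l m)^2 = tau l m (4/(l+2)) (-2*l/(l+2)) ∧
    (s3 m * z3 l m)^2 = tauv l m ((-(2/(m+2))) • c3 m) ∧
    (s3 m * z3 l m)^2 = tau l m (-2*m/(m+2)) (4/(m+2)) := by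
  have h1 := sq_s1_mul_z1 hΔ hγ
  have h2 := sq_s2_mul_z2 (m := m) hγ hl
  have h3 := sq_s3_mul_z3 hγ hm
  refine ⟨?_, h1, ?_, h2, ?_, h3⟩
  · rw [h1, c1, tauv_smul_mk]
    congr 1 <;> ring
  · rw [h2, c2, tauv_smul_mk]
    congr 1 <;> ring
  · rw [h3, c3, tauv_smul_mk]
    congr 1 <;> ring

end
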